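/- arXiv:2312.14764 — 3 statements merged into one kernel-verified Lean document; each statement's English description precedes it below -/
import Mathlib

section
/- Suppose r₁, ṙ₁, r₂, ṙ₂ ∈ ℝ³, μ > 0, r₁ ≠ 0, r₂ ≠ 0, z ∈ ℝ, satisfy: r₁ × ṙ₁ = r₂ × ṙ₂, (|ṙ₁|² − μ/|r₁|) r₁ − (ṙ₁·r₁) ṙ₁ = (|ṙ₂|² − z) r₂ − (ṙ₂·r₂) ṙ₂, and ½|ṙ₁|² − μ/|r₁| = ½|ṙ₂|² − z. Then z²|r₂|² = μ². -/
/-!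
Squaring the Laplace–Lenz vector `A = (|v|² - w) r - (v·r) v` gives
`|A|² = w² |r|² + (|v|² - 2w) |r × v|²`, the classical `|e|² = 1 + 2 E h² / μ²`. Both factors of
the last term are conserved by hypothesis (twice the energy and the squared angular momentum),
so `w² |r|²` takes the same value at both epochs; at the first one, `w = μ / |r₁|` makes it `μ²`.
-/

open Matrix

noncomputable def norm3 (v : Fin 3 → ℝ) : ℝ := Real.sqrt (v ⬝ᵥ v)

def laplaceLenz {R : Type*} [CommRing R] (r v : Fin 3 → R) (w : R) : Fin 3 → R :=
  (v ⬝ᵥ v - w) • r - (v ⬝ᵥ r) • v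

theorem laplaceLenz_dotProduct_self {R : Type*} [CommRing R] (r v : Fin 3 → R) (w : R) :
    laplaceLenz r v w ⬝ᵥ laplaceLenz r v w
      = w ^ 2 * (r ⬝ᵥ r) + (v ⬝ᵥ v - 2 * w) * (r ⨯₃ v ⬝ᵥ r ⨯₃ v) := by
  simp only [laplaceLenz, dotProduct_sub, sub_dotProduct, smul_dotProduct, dotProduct_smul,
    smul_eq_mul, cross_dot_cross, dotProduct_comm v r]
  ring

theorem sq_norm3 (v : Fin 3 → ℝ) : norm3 v ^ 2 = v ⬝ᵥ v :=
  Real.sq_sqrt (Finset.sum_nonneg fun i _ => mul_self_nonneg (v i))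

theorem div_norm3_sq_mul_dotProduct_self {r : Fin 3 → ℝ} (hr : r ≠ 0) (μ : ℝ) :
    (μ / norm3 r) ^ 2 * (r ⬝ᵥ r) = μ ^ 2 := by
  have hrr : r ⬝ᵥ r ≠ 0 := dotProduct_self_eq_zero.not.mpr hr
  rw [div_pow, sq_norm3]
  field_simp

theorem aux_var_constraint_general (r₁ v₁ r₂ v₂ : Fin 3 → ℝ) (μ z : ℝ)
    (hr₁ : r₁ ≠ 0)
    (hc : crossProduct r₁ v₁ = crossProduct r₂ v₂)
    (hL : (v₁ ⬝ᵥ v₁ - μ / norm3 r₁) • r₁ - (v₁ ⬝ᵥ r₁) • v₁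
        = (v₂ ⬝ᵥ v₂ - z) • r₂ - (v₂ ⬝ᵥ r₂) • v₂)
    (hE : (1 / 2) * (v₁ ⬝ᵥ v₁) - μ / norm3 r₁ = (1 / 2) * (v₂ ⬝ᵥ v₂) - z) :
    z ^ 2 * (r₂ ⬝ᵥ r₂) = μ ^ 2 := by
  have hLenz : laplaceLenz r₁ v₁ (μ / norm3 r₁) = laplaceLenz r₂ v₂ z := hL
  have hsq := congrArg (fun e => e ⬝ᵥ e) hLenz
  simp only [laplaceLenz_dotProduct_self, hc] at hsq
  rw [← div_norm3_sq_mul_dotProduct_self hr₁ μ]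
  linear_combination -hsq + 2 * (r₂ ⨯₃ v₂ ⬝ᵥ r₂ ⨯₃ v₂) * hE

theorem aux_var_constraint (r₁ v₁ r₂ v₂ : Fin 3 → ℝ) (μ z : ℝ) (hμ : 0 < μ)
    (hr₁ : r₁ ≠ 0) (hr₂ : r₂ ≠ 0)
    (hc : crossProduct r₁ v₁ = crossProduct r₂ v₂)
    (hL : (v₁ ⬝ᵥ v₁ - μ / norm3 r₁) • r₁ - (v₁ ⬝ᵥ r₁) • v₁
        = (v₂ ⬝ᵥ v₂ - z) • r₂ - (v₂ ⬝ᵥ r₂) • v₂)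
    (hE : (1 / 2) * (v₁ ⬝ᵥ v₁) - μ / norm3 r₁ = (1 / 2) * (v₂ ⬝ᵥ v₂) - z) :
    z ^ 2 * (r₂ ⬝ᵥ r₂) = μ ^ 2 :=
  aux_var_constraint_general r₁ v₁ r₂ v₂ μ z hr₁ hc hL hE
end

section
/- Let r₁, ṙ₁, r₂, ṙ₂ ∈ ℝ³ with r₁ × ṙ₁ = r₂ × ṙ₂ =: c, μ > 0 and r₁ ≠ 0. Let ê₂ ∈ ℝ³ be a unit vector and q₂ ∈ ℝ³ with r₂ = q₂ + ρ₂ ê₂, D₂ = q₂ × ê₂, and let μL₁ = (|ṙ₁|² − μ/|r₁|) r₁ − (ṙ₁·r₁) ṙ₁. Then for every z₂ ∈ ℝ, the quantity q̃₅ := (μL₁ − (|ṙ₂|² r₂ − (ṙ₂·r₂)ṙ₂ − z₂ r₂))·D₂ satisfies q̃₅ = (c·ê₂)[r₂·(ṙ₁ − ṙ₂)] − (μ/|r₁|)(r₁·D₂). -/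
open Matrix
set_option maxHeartbeats 2000000
lemma cross0' (a b : Fin 3 → ℝ) : (a ⨯₃ b) 0 = a 1 * b 2 - a 2 * b 1 := by simp [cross_apply]
lemma cross1' (a b : Fin 3 → ℝ) : (a ⨯₃ b) 1 = a 2 * b 0 - a 0 * b 2 := by simp [cross_apply]
lemma cross2' (a b : Fin 3 → ℝ) : (a ⨯₃ b) 2 = a 0 * b 1 - a 1 * b 0 := by simp [cross_apply]
lemma dot3 (a b : Fin 3 → ℝ) : a ⬝ᵥ b = a 0 * b 0 + a 1 * b 1 + a 2 * b 2 := by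
  simp [dotProduct, Fin.sum_univ_three]

theorem q5_identity (r₁ v₁ r₂ v₂ q₂ e₂ c D₂ : Fin 3 → ℝ) (μ ρ₂ z₂ : ℝ)
    (hμ : 0 < μ) (hr₁ : r₁ ≠ 0)
    (he₂ : e₂ ⬝ᵥ e₂ = 1)
    (hr₂q : r₂ = q₂ + ρ₂ • e₂)
    (hc : c = r₁ ⨯₃ v₁) (hcc : r₁ ⨯₃ v₁ = r₂ ⨯₃ v₂)
    (hD₂ : D₂ = q₂ ⨯₃ e₂) :
    ((v₁ ⬝ᵥ v₁ - μ / norm3 r₁) • r₁ - (v₁ ⬝ᵥ r₁) • v₁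
      - ((v₂ ⬝ᵥ v₂ - z₂) • r₂ - (v₂ ⬝ᵥ r₂) • v₂)) ⬝ᵥ D₂
    = (c ⬝ᵥ e₂) * (r₂ ⬝ᵥ (v₁ - v₂)) - (μ / norm3 r₁) * (r₁ ⬝ᵥ D₂) := by
  have hD' : D₂ = r₂ ⨯₃ e₂ := by
    rw [hD₂, hr₂q, map_add, LinearMap.add_apply, _root_.map_smul, LinearMap.smul_apply,
      cross_self, smul_zero, add_zero]
  have h0 := congrFun hcc 0
  have h1 := congrFun hcc 1
  have h2 := congrFun hcc 2
  rw [hD']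
  simp only [hc, dot3, cross0', cross1', cross2', Pi.sub_apply, Pi.smul_apply,
    smul_eq_mul] at h0 h1 h2 ⊢
  linear_combination
    ((v₂ 0 * r₂ 0 + v₂ 1 * r₂ 1 + v₂ 2 * r₂ 2) * e₂ 0
      - (v₁ 0 * e₂ 0 + v₁ 1 * e₂ 1 + v₁ 2 * e₂ 2) * r₂ 0) * h0 +
    ((v₂ 0 * r₂ 0 + v₂ 1 * r₂ 1 + v₂ 2 * r₂ 2) * e₂ 1
      - (v₁ 0 * e₂ 0 + v₁ 1 * e₂ 1 + v₁ 2 * e₂ 2) * r₂ 1) * h1 +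
    ((v₂ 0 * r₂ 0 + v₂ 1 * r₂ 1 + v₂ 2 * r₂ 2) * e₂ 2
      - (v₁ 0 * e₂ 0 + v₁ 1 * e₂ 1 + v₁ 2 * e₂ 2) * r₂ 2) * h2
end

section
/- Let r₁, ṙ₁, r₂, ṙ₂ ∈ ℝ³ with r₁ × ṙ₁ = r₂ × ṙ₂ =: c, let ê₂ ∈ ℝ³, z₂ ∈ ℝ, μ ≠ 0, μL₁ = (|ṙ₁|² − μ/|r₁|) r₁ − (ṙ₁·r₁) ṙ₁ (r₁ ≠ 0), μL̃₂ = (|ṙ₂|² − z₂) r₂ − (ṙ₂·r₂) ṙ₂. Then μ(L₁ − L̃₂)·(r₁ × ê₂) = (c·ê₂)[r₁·(ṙ₁ − ṙ₂)] − z₂ ((r₁ × r₂)·ê₂). -/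
open Matrix

theorem q6_identity (r₁ v₁ r₂ v₂ e₂ c : Fin 3 → ℝ) (μ z₂ : ℝ)
    (hμ : μ ≠ 0) (hr₁ : r₁ ≠ 0)
    (hc : c = r₁ ⨯₃ v₁) (hcc : r₁ ⨯₃ v₁ = r₂ ⨯₃ v₂) :
    ((v₁ ⬝ᵥ v₁ - μ / norm3 r₁) • r₁ - (v₁ ⬝ᵥ r₁) • v₁
      - ((v₂ ⬝ᵥ v₂ - z₂) • r₂ - (v₂ ⬝ᵥ r₂) • v₂)) ⬝ᵥ (r₁ ⨯₃ e₂)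
    = (c ⬝ᵥ e₂) * (r₁ ⬝ᵥ (v₁ - v₂)) - z₂ * ((r₁ ⨯₃ r₂) ⬝ᵥ e₂) := by
  have h0 := congrFun hcc 0
  have h1 := congrFun hcc 1
  have h2 := congrFun hcc 2
  simp [crossProduct] at h0 h1 h2
  subst hc
  simp [crossProduct, dotProduct, Fin.sum_univ_three, sub_mul, mul_sub]
  linear_combination (r₁ 0 * v₂ 0 + r₁ 1 * v₂ 1 + r₁ 2 * v₂ 2) *
    (e₂ 0 * h0 + e₂ 1 * h1 + e₂ 2 * h2)
    - (v₂ 0 * e₂ 0 + v₂ 1 * e₂ 1 + v₂ 2 * e₂ 2) *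
      (r₁ 0 * h0 + r₁ 1 * h1 + r₁ 2 * h2)
end
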